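/- Let the activation function g and the loss ℒ (in its second argument) be differentiable, and let θ̂ = γ_λ(θ) for an arbitrary parameter vector θ, a duplicated unit h ∈ {1,…,H_ℓ̂}, and λ_0,…,λ_K ∈ ℝ with Σ_{i=0}^K λ_i = 1. Then at θ̂ the partial derivative of the enlarged network's empirical risk with respect to the outgoing weight of each copied neuron equals that with respect to the outgoing weight of neuron h: ∂R̂_emp/∂ŵ_{j,H_ℓ̂+k}^{ℓ̂+1}(θ̂) = ∂R̂_emp/∂ŵ_{jh}^{ℓ̂+1}(θ̂) for all j = 1,…,H_{ℓ̂+1} and k = 1,…,K. -/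

import Mathlib

/-- Parameters of a fully connected feedforward network: `w ℓ j i` is the weight from
unit `i` of layer `ℓ-1` to unit `j` of layer `ℓ`, and `b ℓ j` is the bias of unit `j`
of layer `ℓ`.  Layers are numbered `1, …, L` (layer `0` is the input); units within a
layer are numbered from `0`, so layer `ℓ` consists of the units `0, …, H ℓ - 1`. -/
structure NNParams where
  w : ℕ → ℕ → ℕ → ℝ
  b : ℕ → ℕ → ℝ

/-- `layerOut g H θ x ℓ i` : the output of unit `i` of layer `ℓ` on input `x`
(`layerOut g H θ x 0 = x`, and for `ℓ ≥ 1` it is `g` applied to the pre-activation). -/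
noncomputable def layerOut (g : ℝ → ℝ) (H : ℕ → ℕ) (θ : NNParams) (x : ℕ → ℝ) :
    ℕ → ℕ → ℝ
  | 0, i => x i
  | ℓ + 1, i =>
      g (∑ j ∈ Finset.range (H ℓ), θ.w (ℓ + 1) i j * layerOut g H θ x ℓ j + θ.b (ℓ + 1) i)

/-- Pre-activation `a_j^ℓ(x, θ)` of unit `j` of layer `ℓ ≥ 1`:
`a_j^ℓ = ∑_{i < H (ℓ-1)} w_{ji}^ℓ · (output of unit i of layer ℓ-1) + σ_j^ℓ`.
The outputs of the last layer `L` are `f_r(x,θ) = preact g H θ x L r` (linear output units). -/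
noncomputable def preact (g : ℝ → ℝ) (H : ℕ → ℕ) (θ : NNParams) (x : ℕ → ℝ)
    (ℓ j : ℕ) : ℝ :=
  ∑ i ∈ Finset.range (H (ℓ - 1)), θ.w ℓ j i * layerOut g H θ x (ℓ - 1) i + θ.b ℓ j

/-- Empirical risk `R_emp(θ) = (1/P) ∑_{p<P} ℒ(y^p, f(x^p, θ))`, where the network has
`L` layers with layer sizes given by `H`, the training inputs are `X p` and the labels
`Y p`, and `m` is the output dimension seen by the loss. -/
noncomputable def Remp (g : ℝ → ℝ) (H : ℕ → ℕ) (L P : ℕ) {m : ℕ}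
    (X Y : ℕ → ℕ → ℝ) (loss : (ℕ → ℝ) → (Fin m → ℝ) → ℝ) (θ : NNParams) : ℝ :=
  (1 / (P : ℝ)) * ∑ p ∈ Finset.range P,
    loss (Y p) (fun r => preact g H θ (X p) L r)

/-- Layer sizes of the network enlarged by adding `K` new neurons to layer `l`. -/
def enlargeH (H : ℕ → ℕ) (l K : ℕ) : ℕ → ℕ :=
  fun ℓ => if ℓ = l then H l + K else H ℓ

/-- The embedding `α_{ζv}` : copy all parameters, give the `k`-th new neuron of layer `l`
(`k = 0, …, K-1`, i.e. unit `H l + k`) the bias `ζ k` and incoming weights `v k`, and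
set all weights from the new neurons to layer `l+1` to zero. -/
noncomputable def alphaEmb (H : ℕ → ℕ) (l K : ℕ) (ζ : ℕ → ℝ) (v : ℕ → ℕ → ℝ)
    (θ : NNParams) : NNParams where
  w := fun ℓ j i =>
    if ℓ = l ∧ H l ≤ j then v (j - H l) i
    else if ℓ = l + 1 ∧ H l ≤ i then 0
    else θ.w ℓ j i
  b := fun ℓ j => if ℓ = l ∧ H l ≤ j then ζ (j - H l) else θ.b ℓ j

/-- The embedding `β_{ζs}` : copy all parameters except the biases of layer `l+1`, give
the `k`-th new neuron of layer `l` the bias `ζ k` and zero incoming weights, set the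
outgoing weight from the `k`-th new neuron to unit `j` of layer `l+1` to `s j k`, and
replace the bias of unit `j` of layer `l+1` by `σ_j - ∑_{k<K} s j k · g (ζ k)`. -/
noncomputable def betaEmb (g : ℝ → ℝ) (H : ℕ → ℕ) (l K : ℕ) (ζ : ℕ → ℝ)
    (s : ℕ → ℕ → ℝ) (θ : NNParams) : NNParams where
  w := fun ℓ j i =>
    if ℓ = l ∧ H l ≤ j then 0
    else if ℓ = l + 1 ∧ H l ≤ i then s j (i - H l)
    else θ.w ℓ j i
  b := fun ℓ j =>
    if ℓ = l ∧ H l ≤ j then ζ (j - H l)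
    else if ℓ = l + 1 then θ.b (l + 1) j - ∑ k ∈ Finset.range K, s j k * g (ζ k)
    else θ.b ℓ j

/-- The embedding `γ_λ` : duplicate unit `h` of layer `l` into each of the `K` new
neurons (same bias and incoming weights as unit `h`), and split the outgoing weights:
unit `h` keeps `lam 0 · w_{jh}^{l+1}` and the `k`-th new neuron (`k = 0, …, K-1`,
i.e. unit `H l + k`, corresponding to `λ_{k+1}` of the paper) gets
`lam (k+1) · w_{jh}^{l+1}`; all other parameters are copied. -/
noncomputable def gammaEmb (H : ℕ → ℕ) (l K : ℕ) (h : ℕ) (lam : ℕ → ℝ)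
    (θ : NNParams) : NNParams where
  w := fun ℓ j i =>
    if ℓ = l ∧ H l ≤ j then θ.w l h i
    else if ℓ = l + 1 ∧ i = h then lam 0 * θ.w (l + 1) j h
    else if ℓ = l + 1 ∧ H l ≤ i then lam (i - H l + 1) * θ.w (l + 1) j h
    else θ.w ℓ j i
  b := fun ℓ j => if ℓ = l ∧ H l ≤ j then θ.b l h else θ.b ℓ j

/-- `θ` with the single weight `w ℓ j i` replaced by `t`. -/
noncomputable def updW (θ : NNParams) (ℓ j i : ℕ) (t : ℝ) : NNParams :=
  ⟨fun ℓ' j' i' => if ℓ' = ℓ ∧ j' = j ∧ i' = i then t else θ.w ℓ' j' i', θ.b⟩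

/-- `θ` with the single bias `b ℓ j` replaced by `t`. -/
noncomputable def updB (θ : NNParams) (ℓ j : ℕ) (t : ℝ) : NNParams :=
  ⟨θ.w, fun ℓ' j' => if ℓ' = ℓ ∧ j' = j then t else θ.b ℓ' j'⟩

/-- `∇ R_emp(θ) = 0` : every partial derivative of the empirical risk with respect to an
actual network parameter (a weight `w ℓ j i` or a bias `b ℓ j`, `1 ≤ ℓ ≤ L`, `j < H ℓ`,
`i < H (ℓ-1)`) vanishes at `θ`. -/
def IsCritical (g : ℝ → ℝ) (H : ℕ → ℕ) (L P : ℕ) {m : ℕ}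
    (X Y : ℕ → ℕ → ℝ) (loss : (ℕ → ℝ) → (Fin m → ℝ) → ℝ) (θ : NNParams) : Prop :=
  (∀ ℓ j i, 1 ≤ ℓ → ℓ ≤ L → j < H ℓ → i < H (ℓ - 1) →
      deriv (fun t => Remp g H L P X Y loss (updW θ ℓ j i t)) (θ.w ℓ j i) = 0) ∧
  ∀ ℓ j, 1 ≤ ℓ → ℓ ≤ L → j < H ℓ →
      deriv (fun t => Remp g H L P X Y loss (updB θ ℓ j t)) (θ.b ℓ j) = 0

/-- Layer sizes after enlarging layer `p.1` by `p.2` neurons for each pair in the list. -/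
def multiEnlargeH : (ℕ → ℕ) → List (ℕ × ℕ) → (ℕ → ℕ)
  | H, [] => H
  | H, (l, K) :: rest => multiEnlargeH (enlargeH H l K) rest

/-- Composition of `α` embeddings: for each `(l, K)` in the list (in order), add `K` new
neurons to layer `l` via `α` with biases `ζ l` and incoming weights `v l`. -/
noncomputable def multiAlpha (ζ : ℕ → ℕ → ℝ) (v : ℕ → ℕ → ℕ → ℝ) :
    (ℕ → ℕ) → List (ℕ × ℕ) → NNParams → NNParams
  | _, [], θ => θ
  | H, (l, K) :: rest, θ =>
      multiAlpha ζ v (enlargeH H l K) rest (alphaEmb H l K (ζ l) (v l) θ)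

noncomputable def multiBeta (g : ℝ → ℝ) (ζ : ℕ → ℕ → ℝ) (s : ℕ → ℕ → ℕ → ℝ) :
    (ℕ → ℕ) → List (ℕ × ℕ) → NNParams → NNParams
  | _, [], θ => θ
  | H, (l, K) :: rest, θ =>
      multiBeta g ζ s (enlargeH H l K) rest (betaEmb g H l K (ζ l) (s l) θ)

noncomputable def multiGamma (hsel : ℕ → ℕ) (lam : ℕ → ℕ → ℝ) :
    (ℕ → ℕ) → List (ℕ × ℕ) → NNParams → NNParams
  | _, [], θ => θ
  | H, (l, K) :: rest, θ =>
      multiGamma hsel lam (enlargeH H l K) rest (gammaEmb H l K (hsel l) (lam l) θ)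

/-- A single enlargement step: either a `β` embedding with zero outgoing weights, or a
`γ` embedding. -/
inductive EmbStep where
  | beta (l K : ℕ) (ζ : ℕ → ℝ)
  | gamma (l K : ℕ) (h : ℕ) (lam : ℕ → ℝ)

def EmbStep.layer : EmbStep → ℕ
  | .beta l _ _ => l
  | .gamma l _ _ _ => l

def EmbStep.count : EmbStep → ℕ
  | .beta _ K _ => K
  | .gamma _ K _ _ => K

noncomputable def EmbStep.apply (g : ℝ → ℝ) (H : ℕ → ℕ) (θ : NNParams) : EmbStep → NNParams
  | .beta l K ζ => betaEmb g H l K ζ (fun _ _ => 0) θ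
  | .gamma l K h lam => gammaEmb H l K h lam θ

def EmbStep.OK (H : ℕ → ℕ) (L : ℕ) : EmbStep → Prop
  | .beta l _ _ => 1 ≤ l ∧ l + 1 ≤ L
  | .gamma l K h lam => 1 ≤ l ∧ l + 1 ≤ L ∧ h < H l ∧ ∑ i ∈ Finset.range (K + 1), lam i = 1

noncomputable def applySteps (g : ℝ → ℝ) : (ℕ → ℕ) → List EmbStep → NNParams → NNParams
  | _, [], θ => θ
  | H, st :: rest, θ =>
      applySteps g (enlargeH H st.layer st.count) rest (EmbStep.apply g H θ st)

def stepsH : (ℕ → ℕ) → List EmbStep → (ℕ → ℕ)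
  | H, [] => H
  | H, st :: rest => stepsH (enlargeH H st.layer st.count) rest

/-
Proof idea: under `γ_λ` the new neuron `H l + k` has the same bias and incoming weights as
neuron `h`, so the two neurons have the same output on every input. Hence raising the
outgoing weight of the copy by some amount changes the network exactly as raising that of
`h` by the same amount: as a function of the weight, the risk along the copy's weight is a
translate of the risk along `h`'s weight, and the two derivatives coincide.
-/

lemma Finset.sum_ite_mul_eq_add {ι R : Type*} [DecidableEq ι] [CommRing R] {s : Finset ι}
    {a : ι} (ha : a ∈ s) (c : R) (W O : ι → R) :
    ∑ i ∈ s, (if i = a then c else W i) * O i = ∑ i ∈ s, W i * O i + (c - W a) * O a := by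
  have hsplit : ∀ i, (if i = a then c else W i) * O i
      = W i * O i + if a = i then (c - W a) * O i else 0 := by
    intro i
    by_cases hi : i = a
    · subst hi
      simp only [if_true]
      ring
    · simp [hi, Ne.symm hi]
  simp only [hsplit, Finset.sum_add_distrib, Finset.sum_ite_eq, if_pos ha]

lemma Finset.sum_ite_mul_shift {ι R : Type*} [DecidableEq ι] [CommRing R] {s : Finset ι}
    {a b : ι} (ha : a ∈ s) (hb : b ∈ s) (t : R) (W O : ι → R) (hO : O a = O b) :
    ∑ i ∈ s, (if i = a then t else W i) * O i
      = ∑ i ∈ s, (if i = b then t + (W b - W a) else W i) * O i := by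
  rw [Finset.sum_ite_mul_eq_add ha, Finset.sum_ite_mul_eq_add hb, hO]
  ring

section Network

variable {g : ℝ → ℝ} {H : ℕ → ℕ}

lemma updW_w_self (θ : NNParams) (ℓ j a i : ℕ) (t : ℝ) :
    (updW θ ℓ j a t).w ℓ j i = if i = a then t else θ.w ℓ j i := by
  simp [updW]

lemma updW_w_of_ne {θ : NNParams} {ℓ j a ℓ' j' : ℕ} (i : ℕ) (t : ℝ)
    (hne : ¬(ℓ' = ℓ ∧ j' = j)) : (updW θ ℓ j a t).w ℓ' j' i = θ.w ℓ' j' i := by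
  simp only [updW]
  exact if_neg fun h => hne ⟨h.1, h.2.1⟩

lemma layerOut_succ (θ : NNParams) (x : ℕ → ℝ) (ℓ u : ℕ) :
    layerOut g H θ x (ℓ + 1) u = g (preact g H θ x (ℓ + 1) u) := rfl

lemma layerOut_updW_of_lt (θ : NNParams) (x : ℕ → ℝ) {ℓ ℓ₀ : ℕ} (j a : ℕ) (t : ℝ)
    (hℓ : ℓ < ℓ₀) : layerOut g H (updW θ ℓ₀ j a t) x ℓ = layerOut g H θ x ℓ := by
  induction ℓ with
  | zero => rfl
  | succ ℓ ih =>
    funext u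
    simp only [layerOut_succ, preact, Nat.add_sub_cancel, ih (by omega)]
    congr 2
    exact Finset.sum_congr rfl fun i _ => by rw [updW_w_of_ne i t (by omega)]

lemma preact_updW_shift_of_layerOut_eq (θ : NNParams) (x : ℕ → ℝ) {ℓ j a b : ℕ}
    (ha : a < H ℓ) (hb : b < H ℓ) (hab : layerOut g H θ x ℓ a = layerOut g H θ x ℓ b)
    (t : ℝ) (m : ℕ) :
    preact g H (updW θ (ℓ + 1) j a t) x m
      = preact g H (updW θ (ℓ + 1) j b (t + (θ.w (ℓ + 1) j b - θ.w (ℓ + 1) j a))) x m := by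
  set θ₁ := updW θ (ℓ + 1) j a t with hθ₁
  set θ₂ := updW θ (ℓ + 1) j b (t + (θ.w (ℓ + 1) j b - θ.w (ℓ + 1) j a)) with hθ₂
  have hpre : ∀ m, layerOut g H θ₁ x (m - 1) = layerOut g H θ₂ x (m - 1) →
      preact g H θ₁ x m = preact g H θ₂ x m := by
    intro m hm
    funext u
    simp only [preact, hm]
    congr 1
    by_cases hmu : m = ℓ + 1 ∧ u = j
    · obtain ⟨rfl, rfl⟩ := hmu
      have hlayer : layerOut g H θ₂ x ℓ = layerOut g H θ x ℓ :=
        layerOut_updW_of_lt θ x _ _ _ (by omega)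
      rw [Nat.add_sub_cancel, hlayer]
      simp only [hθ₁, hθ₂, updW_w_self]
      exact Finset.sum_ite_mul_shift (Finset.mem_range.2 ha) (Finset.mem_range.2 hb) _ _ _ hab
    · exact Finset.sum_congr rfl fun i _ => by
        rw [updW_w_of_ne i _ hmu, updW_w_of_ne i _ hmu]
  have hout : ∀ m, layerOut g H θ₁ x m = layerOut g H θ₂ x m := by
    intro m
    induction m with
    | zero => rfl
    | succ m ih =>
      funext u
      rw [layerOut_succ, layerOut_succ, hpre (m + 1) ih]
  exact hpre m (hout _)

lemma Remp_updW_shift_of_layerOut_eq {L P m : ℕ} {X Y : ℕ → ℕ → ℝ}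
    (loss : (ℕ → ℝ) → (Fin m → ℝ) → ℝ) (θ : NNParams) {ℓ j a b : ℕ}
    (ha : a < H ℓ) (hb : b < H ℓ)
    (hab : ∀ p, layerOut g H θ (X p) ℓ a = layerOut g H θ (X p) ℓ b) (t : ℝ) :
    Remp g H L P X Y loss (updW θ (ℓ + 1) j a t)
      = Remp g H L P X Y loss
          (updW θ (ℓ + 1) j b (t + (θ.w (ℓ + 1) j b - θ.w (ℓ + 1) j a))) := by
  simp only [Remp, preact_updW_shift_of_layerOut_eq θ _ ha hb (hab _)]

lemma deriv_Remp_updW_eq_of_layerOut_eq {L P m : ℕ} {X Y : ℕ → ℕ → ℝ}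
    (loss : (ℕ → ℝ) → (Fin m → ℝ) → ℝ) (θ : NNParams) {ℓ j a b : ℕ}
    (ha : a < H ℓ) (hb : b < H ℓ)
    (hab : ∀ p, layerOut g H θ (X p) ℓ a = layerOut g H θ (X p) ℓ b) :
    deriv (fun t => Remp g H L P X Y loss (updW θ (ℓ + 1) j a t)) (θ.w (ℓ + 1) j a)
      = deriv (fun t => Remp g H L P X Y loss (updW θ (ℓ + 1) j b t)) (θ.w (ℓ + 1) j b) := by
  simp only [Remp_updW_shift_of_layerOut_eq loss θ ha hb hab]
  rw [deriv_comp_add_const (fun t => Remp g H L P X Y loss (updW θ (ℓ + 1) j b t)),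
    add_sub_cancel]

end Network

lemma enlargeH_self (H : ℕ → ℕ) (l K : ℕ) : enlargeH H l K l = H l + K := by
  simp [enlargeH]

lemma layerOut_gammaEmb_copy (g : ℝ → ℝ) (H H' : ℕ → ℕ) {l : ℕ} (hl : 1 ≤ l)
    (K h k : ℕ) (lam : ℕ → ℝ) (θ : NNParams) (x : ℕ → ℝ) :
    layerOut g H' (gammaEmb H l K h lam θ) x l (H l + k)
      = layerOut g H' (gammaEmb H l K h lam θ) x l h := by
  obtain ⟨l, rfl⟩ : ∃ l', l = l' + 1 := ⟨l - 1, by omega⟩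
  simp [layerOut_succ, preact, gammaEmb]

theorem gammaEmb_copied_outgoing_deriv_eq_general
    (g : ℝ → ℝ) (H : ℕ → ℕ) (L P : ℕ) (X Y : ℕ → ℕ → ℝ)
    (loss : (ℕ → ℝ) → (Fin (H L) → ℝ) → ℝ)
    (l : ℕ) (hl1 : 1 ≤ l) (K : ℕ)
    (h : ℕ) (hh : h < H l) (lam : ℕ → ℝ)
    (θ : NNParams) (θhat : NNParams) (hemb : θhat = gammaEmb H l K h lam θ) :
    ∀ j k, j < H (l + 1) → k < K →
      deriv (fun t => Remp g (enlargeH H l K) L P X Y loss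
            (updW θhat (l + 1) j (H l + k) t))
          (θhat.w (l + 1) j (H l + k))
        = deriv (fun t => Remp g (enlargeH H l K) L P X Y loss
              (updW θhat (l + 1) j h t))
            (θhat.w (l + 1) j h) := by
  subst hemb
  intro j k _ hk
  refine deriv_Remp_updW_eq_of_layerOut_eq loss _ ?_ ?_ fun p => ?_
  · rw [enlargeH_self]; omega
  · rw [enlargeH_self]; omega
  · exact layerOut_gammaEmb_copy g H _ hl1 K h k lam θ (X p)

/-- If `g` and the loss (in its second argument) are differentiable and
`θ̂ = γ_λ(θ)` for a duplicated unit `h < H l` and coefficients `λ_0, …, λ_K` summing to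
one, then at `θ̂` the partial derivative of the enlarged network's empirical risk with
respect to the outgoing weight of each copied neuron equals the partial derivative with
respect to the outgoing weight of neuron `h`. -/
theorem gammaEmb_copied_outgoing_deriv_eq
    (g : ℝ → ℝ) (H : ℕ → ℕ) (L P : ℕ) (X Y : ℕ → ℕ → ℝ)
    (loss : (ℕ → ℝ) → (Fin (H L) → ℝ) → ℝ)
    (hg : Differentiable ℝ g)
    (hloss : ∀ y : ℕ → ℝ,
      Differentiable ℝ (fun z : EuclideanSpace ℝ (Fin (H L)) => loss y z))
    (l : ℕ) (hl1 : 1 ≤ l) (hlL : l + 1 ≤ L) (K : ℕ)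
    (h : ℕ) (hh : h < H l) (lam : ℕ → ℝ)
    (hlam : ∑ i ∈ Finset.range (K + 1), lam i = 1)
    (θ : NNParams) (θhat : NNParams) (hemb : θhat = gammaEmb H l K h lam θ) :
    ∀ j k, j < H (l + 1) → k < K →
      deriv (fun t => Remp g (enlargeH H l K) L P X Y loss
            (updW θhat (l + 1) j (H l + k) t))
          (θhat.w (l + 1) j (H l + k))
        = deriv (fun t => Remp g (enlargeH H l K) L P X Y loss
              (updW θhat (l + 1) j h t))
            (θhat.w (l + 1) j h) :=
  gammaEmb_copied_outgoing_deriv_eq_general g H L P X Y loss l hl1 K h hh lam θ θhat hemb
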